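/- arXiv:2501.19372 — 5 statements merged into one kernel-verified Lean document; each statement's English description precedes it below -/
import Mathlib

section
/- Let f : ℝ → ℝ with f(x) = |x| + min{x - 1/8, x², 2x - 1/16} on [-2, 2]. Then x = 0 is a critical point of the DC decomposition f = f₁ - f₂, where f₁(x) = |x| + (x - 1/8) + x² + (2x - 1/16) and f₂(x) = max{x² + 2x - 1/16, x - 1/8 + 2x - 1/16, x - 1/8 + x²} (i.e., there exist subgradients g₁ ∈ ∂f₁(0), g₂ ∈ ∂f₂(0) with g₁ = g₂), yet min over q ∈ Δ³ of |0| + q₁(0 - 1/8) + q₂·0² + q₃(2·0 - 1/16) = -1/8, so the gain at x = 0 with weights Q = (0,1,0) is strictly positive. -/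
/-- For `F(x) = |x| + min{x - 1/8, x², 2x - 1/16}` on `X = [-2,2]`, the point
`x = 0` is critical for the DC decomposition `F = f₁ - f₂` (subgradients over
`X` coincide, the normal cone at the interior point `0` being `{0}`), yet the
gain at `x = 0` with weights `Q = (0,1,0)` is strictly positive: the minimum of
`q₁(-1/8) + q₂·0 + q₃(-1/16)` over the simplex `Δ³` equals `-1/8 < 0 = F̄(0,Q)`. -/
theorem critical_point_with_positive_gain
    (X : Set ℝ) (hX : X = Set.Icc (-2 : ℝ) 2)
    (f₁ f₂ : ℝ → ℝ)
    (hf₁ : ∀ x, f₁ x = |x| + (x - 1/8) + x^2 + (2*x - 1/16))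
    (hf₂ : ∀ x, f₂ x = max (max (x^2 + (2*x - 1/16)) ((x - 1/8) + (2*x - 1/16)))
      ((x - 1/8) + x^2)) :
    (∃ g₁ g₂ : ℝ,
      (∀ y ∈ X, f₁ 0 + g₁ * (y - 0) ≤ f₁ y) ∧
      (∀ y ∈ X, f₂ 0 + g₂ * (y - 0) ≤ f₂ y) ∧
      g₁ = g₂) ∧
    IsLeast {v : ℝ | ∃ q : Fin 3 → ℝ, (∀ i, 0 ≤ q i) ∧ (∑ i, q i = 1) ∧
        v = |(0:ℝ)| + (q 0 * ((0:ℝ) - 1/8) + q 1 * (0:ℝ)^2 + q 2 * (2*(0:ℝ) - 1/16))}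
      (-1/8) ∧
    (-1/8 : ℝ) < |(0:ℝ)| + (0:ℝ)^2 := by
  refine ⟨⟨2, 2, ?_, ?_, rfl⟩, ⟨?_, ?_⟩, by norm_num⟩
  · intro y hy
    rw [hf₁ 0, hf₁ y]
    simp only [abs_zero]
    nlinarith [neg_abs_le y, sq_nonneg y]
  · intro y hy
    rw [hf₂ 0, hf₂ y]
    have h1 : y^2 + (2*y - 1/16) ≤ max (max (y^2 + (2*y - 1/16)) ((y - 1/8) + (2*y - 1/16))) ((y - 1/8) + y^2) :=
      le_max_of_le_left (le_max_left _ _)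
    have h2 : max (max ((0:ℝ)^2 + (2*0 - 1/16)) ((0 - 1/8) + (2*0 - 1/16))) ((0 - 1/8) + (0:ℝ)^2) = -1/16 := by norm_num
    rw [h2]
    nlinarith [sq_nonneg y]
  · refine ⟨![1,0,0], ?_, ?_, ?_⟩
    · intro i; fin_cases i <;> norm_num
    · simp [Fin.sum_univ_three]
    · simp [Fin.sum_univ_three]; norm_num
  · rintro v ⟨q, hq, hsum, hv⟩
    rw [Fin.sum_univ_three] at hsum
    have h0 := hq 0; have h1 := hq 1; have h2 := hq 2
    rw [hv]; simp only [abs_zero]; nlinarith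
end

section
/- Let C ∈ [0,1], let h ∈ ℝ^n, let q* ∈ arg min_{q̃ ∈ Δ^n} ⟨q̃, h⟩, let q ∈ Δ^n and q̂₊ ∈ Δ^n. Define ε = min{1, C·⟨q - q*, h⟩/⟨q̂₊ - q*, h⟩} (with ε = 1 if q̂₊ = q*), and q₊ = ε·q̂₊ + (1-ε)·q*. Then ⟨q - q₊, h⟩ ≥ (1-C)·⟨q - q*, h⟩. -/
open Classical

/-- Per-term exploration bound: the relaxed weight update
`q₊ = ε·q̂₊ + (1-ε)·q*` with the prescribed exploration ratio `ε` retains a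
`(1-C)` fraction of the decrease achieved by the exact update `q*`. -/
theorem exploration_bound
    (n : ℕ) (C : ℝ) (hC : C ∈ Set.Icc (0:ℝ) 1)
    (h : Fin n → ℝ)
    (qstar q qhat : Fin n → ℝ)
    (hqstar : (∀ i, 0 ≤ qstar i) ∧ (∑ i, qstar i = 1))
    (hq : (∀ i, 0 ≤ q i) ∧ (∑ i, q i = 1))
    (hqhat : (∀ i, 0 ≤ qhat i) ∧ (∑ i, qhat i = 1))
    (hstarmin : ∀ qt : Fin n → ℝ, (∀ i, 0 ≤ qt i) → (∑ i, qt i = 1) →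
      ∑ i, qstar i * h i ≤ ∑ i, qt i * h i)
    (ε : ℝ)
    (hε : ε = if qhat = qstar then 1 else
      min 1 (C * (∑ i, (q i - qstar i) * h i) / (∑ i, (qhat i - qstar i) * h i)))
    (qplus : Fin n → ℝ)
    (hqplus : ∀ i, qplus i = ε * qhat i + (1 - ε) * qstar i) :
    (1 - C) * ∑ i, (q i - qstar i) * h i ≤ ∑ i, (q i - qplus i) * h i := by
  set A := ∑ i, (q i - qstar i) * h i with hAdef
  set B := ∑ i, (qhat i - qstar i) * h i with hBdef
  have hsub : ∀ (f : Fin n → ℝ), ∑ i, (f i - qstar i) * h i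
      = ∑ i, f i * h i - ∑ i, qstar i * h i := by
    intro f
    rw [← Finset.sum_sub_distrib]
    exact Finset.sum_congr rfl fun i _ => by ring
  have hA : 0 ≤ A := by
    rw [hAdef, hsub, sub_nonneg]; exact hstarmin q hq.1 hq.2
  have hB : 0 ≤ B := by
    rw [hBdef, hsub, sub_nonneg]; exact hstarmin qhat hqhat.1 hqhat.2
  have key : ε * B ≤ C * A := by
    rcases eq_or_lt_of_le hB with hB0 | hBpos
    · rw [← hB0, mul_zero]; exact mul_nonneg hC.1 hA
    · have hne : qhat ≠ qstar := by
        intro hcontra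
        simp only [hBdef, hcontra, sub_self, zero_mul, Finset.sum_const_zero] at hBpos
        exact lt_irrefl 0 hBpos
      rw [hε, if_neg hne]
      calc min 1 (C * A / B) * B ≤ (C * A / B) * B :=
            mul_le_mul_of_nonneg_right (min_le_right _ _) hB
        _ = C * A := div_mul_cancel₀ _ (ne_of_gt hBpos)
  have heq : ∑ i, (q i - qplus i) * h i = A - ε * B := by
    rw [hAdef, hBdef, Finset.mul_sum, ← Finset.sum_sub_distrib]
    exact Finset.sum_congr rfl fun i _ => by rw [hqplus i]; ring
  rw [heq]; linarith
end

section
/- Under the setup of the exploration bound applied to each s ∈ [N]: with Q₊ = (q₊^{(1)},...,q₊^{(N)}) where q₊^{(s)} = ε^{(s)} q̂₊^{(s)} + (1-ε^{(s)}) (q*)^{(s)} and ε^{(s)} given by the rule ε^{(s)} = min{1, C·⟨q^{(s)} - (q*)^{(s)}, h^{(s)}(x₊)⟩/⟨q̂₊^{(s)} - (q*)^{(s)}, h^{(s)}(x₊)⟩}, one has F̄(x₊, Q) - F̄(x₊, Q₊) ≥ (1-C)·G*(x₊, Q), where G*(x₊, Q) = F̄(x₊, Q) - min_{Q̃} F̄(x₊,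 Q̃). -/
open Classical

/-- Summed exploration bound: applying the per-term exploration rule to each
`s ∈ [N]` guarantees `F̄(x₊,Q) - F̄(x₊,Q₊) ≥ (1-C)·G*(x₊,Q)`, where
`G*(x₊,Q) = F̄(x₊,Q) - min_{Q̃} F̄(x₊,Q̃)`. -/
theorem exploration_bound_summed
    (N : ℕ) (hN : 0 < N) (ns : Fin N → ℕ)
    (C : ℝ) (hC : C ∈ Set.Icc (0:ℝ) 1)
    (hbarx : ℝ)  -- the value h̄(x₊)
    (H : (s : Fin N) → Fin (ns s) → ℝ)  -- the values h^{(s)}(x₊)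
    (q qstar qhat : (s : Fin N) → Fin (ns s) → ℝ)
    (hq : ∀ s, (∀ l, 0 ≤ q s l) ∧ (∑ l, q s l = 1))
    (hqstar : ∀ s, (∀ l, 0 ≤ qstar s l) ∧ (∑ l, qstar s l = 1))
    (hqhat : ∀ s, (∀ l, 0 ≤ qhat s l) ∧ (∑ l, qhat s l = 1))
    (hstarmin : ∀ s, ∀ qt : Fin (ns s) → ℝ, (∀ l, 0 ≤ qt l) → (∑ l, qt l = 1) →
      ∑ l, qstar s l * H s l ≤ ∑ l, qt l * H s l)
    (ε : Fin N → ℝ)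
    (hε : ∀ s, ε s = if qhat s = qstar s then 1 else
      min 1 (C * (∑ l, (q s l - qstar s l) * H s l) /
        (∑ l, (qhat s l - qstar s l) * H s l)))
    (qplus : (s : Fin N) → Fin (ns s) → ℝ)
    (hqplus : ∀ s l, qplus s l = ε s * qhat s l + (1 - ε s) * qstar s l)
    (m : ℝ)
    (hm : IsLeast {v : ℝ | ∃ qt : (s : Fin N) → Fin (ns s) → ℝ,
      (∀ s, (∀ l, 0 ≤ qt s l) ∧ (∑ l, qt s l = 1)) ∧
      v = hbarx + (1 / (N : ℝ)) * ∑ s, ∑ l, qt s l * H s l} m) :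
    (1 - C) * ((hbarx + (1 / (N : ℝ)) * ∑ s, ∑ l, q s l * H s l) - m)
      ≤ (hbarx + (1 / (N : ℝ)) * ∑ s, ∑ l, q s l * H s l)
        - (hbarx + (1 / (N : ℝ)) * ∑ s, ∑ l, qplus s l * H s l) := by
  obtain ⟨hC0, hC1⟩ := hC
  -- A s and B s
  set A : Fin N → ℝ := fun s => ∑ l, (q s l - qstar s l) * H s l with hAdef
  set B : Fin N → ℝ := fun s => ∑ l, (qhat s l - qstar s l) * H s l with hBdef
  have hAeq : ∀ s, A s = ∑ l, q s l * H s l - ∑ l, qstar s l * H s l := by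
    intro s; simp [hAdef, sub_mul, Finset.sum_sub_distrib]
  have hBeq : ∀ s, B s = ∑ l, qhat s l * H s l - ∑ l, qstar s l * H s l := by
    intro s; simp [hBdef, sub_mul, Finset.sum_sub_distrib]
  have hA0 : ∀ s, 0 ≤ A s := by
    intro s
    have := hstarmin s (q s) (hq s).1 (hq s).2
    rw [hAeq]; linarith
  have hB0 : ∀ s, 0 ≤ B s := by
    intro s
    have := hstarmin s (qhat s) (hqhat s).1 (hqhat s).2
    rw [hBeq]; linarith
  -- key per-s bound: ε s * B s ≤ C * A s
  have key : ∀ s, ε s * B s ≤ C * A s := by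
    intro s
    rw [hε s]
    by_cases h : qhat s = qstar s
    · have : B s = 0 := by simp [hBdef, h]
      simp [h, this]
      exact mul_nonneg hC0 (hA0 s)
    · simp only [h, if_false]
      rcases lt_or_eq_of_le (hB0 s) with hBpos | hBzero
      · have hle : min 1 (C * A s / B s) ≤ C * A s / B s := min_le_right _ _
        calc min 1 (C * A s / B s) * B s ≤ (C * A s / B s) * B s :=
              mul_le_mul_of_nonneg_right hle (hB0 s)
          _ = C * A s := by field_simp
      · rw [← hBzero]
        simpa using mul_nonneg hC0 (hA0 s)
  -- value at qplus
  have hplus : ∀ s, ∑ l, qplus s l * H s l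
      = ∑ l, qstar s l * H s l + ε s * B s := by
    intro s
    have : ∀ l, qplus s l * H s l
        = qstar s l * H s l + ε s * ((qhat s l - qstar s l) * H s l) := by
      intro l; rw [hqplus s l]; ring
    rw [Finset.sum_congr rfl fun l _ => this l, Finset.sum_add_distrib,
      ← Finset.mul_sum]
  -- determine m
  have hmval : m = hbarx + (1 / (N : ℝ)) * ∑ s, ∑ l, qstar s l * H s l := by
    apply le_antisymm
    · exact hm.2 ⟨qstar, hqstar, rfl⟩
    · obtain ⟨qt, hqt, rfl⟩ := hm.1
      have hsum : ∑ s, ∑ l, qstar s l * H s l ≤ ∑ s, ∑ l, qt s l * H s l :=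
        Finset.sum_le_sum fun s _ => hstarmin s (qt s) (hqt s).1 (hqt s).2
      have hc : (0:ℝ) ≤ 1 / (N : ℝ) := by positivity
      nlinarith
  -- sum the per-s inequalities
  have hsum : ∑ s, (1 - C) * A s ≤ ∑ s, (A s - ε s * B s) :=
    Finset.sum_le_sum fun s _ => by have := key s; nlinarith
  have hc : (0:ℝ) ≤ 1 / (N : ℝ) := by positivity
  have hmul := mul_le_mul_of_nonneg_left hsum hc
  have e1 : ∑ s, (1 - C) * A s
      = (1 - C) * (∑ s, ∑ l, q s l * H s l - ∑ s, ∑ l, qstar s l * H s l) := by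
    rw [← Finset.mul_sum]
    congr 1
    rw [← Finset.sum_sub_distrib]
    exact Finset.sum_congr rfl fun s _ => hAeq s
  have e2 : ∑ s, (A s - ε s * B s)
      = ∑ s, ∑ l, q s l * H s l - ∑ s, ∑ l, qplus s l * H s l := by
    rw [← Finset.sum_sub_distrib]
    refine Finset.sum_congr rfl fun s _ => ?_
    rw [hplus s, hAeq s]; ring
  rw [e1, e2] at hmul
  rw [hmval]
  nlinarith
end

section
/- Under the r-AM iteration with F̄(x_k, Q_k) - F̄(x_{k+1}, Q_{k+1}) ≥ (1-C_k)·G*(x_k, Q_k), C̄ := sup_k C_k < 1, F̄ bounded below by F*, and F̂ := F̄(x_1, Q_1) < ∞, for every K ≥ 2: min_{k=1,...,K-1} G*(x_k, Q_k) ≤ (F̂ - F*)/Σ_{k=1}^{K-1}(1-C_k) ≤ (F̂ - F*)/((1-C̄)(K-1)). -/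
lemma telescope_Icc (a : ℕ → ℝ) (n : ℕ) (hn : 1 ≤ n) :
    ∑ k ∈ Finset.Icc 1 n, (a k - a (k+1)) = a 1 - a (n+1) := by
  induction n with
  | zero => omega
  | succ m ih =>
    rcases Nat.eq_or_lt_of_le hn with h | h
    · simp [← h]
    · have hm : 1 ≤ m := by omega
      rw [← Finset.insert_Icc_right_eq_Icc_add_one (by omega : 1 ≤ m + 1),
        Finset.sum_insert (by simp), ih hm]
      ring

/-- O(1/K) decay of the minimal gain along the r-AM iteration
(telescoping-sum inequality). -/
theorem rAM_min_gain_rate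
    (a G C : ℕ → ℝ) (Cbar Fstar : ℝ)
    (hdec : ∀ k, 1 ≤ k → (1 - C k) * G k ≤ a k - a (k+1))
    (hG : ∀ k, 0 ≤ G k)
    (hCbar : ∀ k, C k ≤ Cbar) (hCbar1 : Cbar < 1)
    (hlb : ∀ k, Fstar ≤ a k) :
    ∀ K : ℕ, (hK : 2 ≤ K) →
      (Finset.Icc 1 (K-1)).inf' (Finset.nonempty_Icc.mpr (by omega)) G
          ≤ (a 1 - Fstar) / (∑ k ∈ Finset.Icc 1 (K-1), (1 - C k)) ∧
      (a 1 - Fstar) / (∑ k ∈ Finset.Icc 1 (K-1), (1 - C k))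
          ≤ (a 1 - Fstar) / ((1 - Cbar) * ((K : ℝ) - 1)) := by
  intro K hK
  set n := K - 1 with hn
  have hn1 : 1 ≤ n := by omega
  have hne : (Finset.Icc 1 n).Nonempty := Finset.nonempty_Icc.mpr hn1
  set m := (Finset.Icc 1 n).inf' hne G with hm
  have hmle : ∀ k ∈ Finset.Icc 1 n, m ≤ G k := fun k hk => Finset.inf'_le _ hk
  -- lower bound on the sum of (1 - C k)
  have hlow : (1 - Cbar) * ((K : ℝ) - 1) ≤ ∑ k ∈ Finset.Icc 1 n, (1 - C k) := by
    have : ∑ k ∈ Finset.Icc 1 n, (1 - Cbar) ≤ ∑ k ∈ Finset.Icc 1 n, (1 - C k) :=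
      Finset.sum_le_sum (fun k _ => by linarith [hCbar k])
    rw [Finset.sum_const, Nat.card_Icc, nsmul_eq_mul, Nat.add_sub_cancel] at this
    have hcard : ((n : ℕ) : ℝ) = (K : ℝ) - 1 := by
      rw [hn]
      push_cast [Nat.cast_sub (by omega : 1 ≤ K)]
      ring
    rw [hcard] at this
    linarith [this]
  have hpos' : (0:ℝ) < (1 - Cbar) * ((K : ℝ) - 1) := by
    apply mul_pos (by linarith)
    have : (2:ℝ) ≤ (K:ℝ) := by exact_mod_cast hK
    linarith
  have hSpos : (0:ℝ) < ∑ k ∈ Finset.Icc 1 n, (1 - C k) := lt_of_lt_of_le hpos' hlow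
  -- main telescoping inequality
  have hmain : m * (∑ k ∈ Finset.Icc 1 n, (1 - C k)) ≤ a 1 - Fstar := by
    have h1 : ∑ k ∈ Finset.Icc 1 n, (1 - C k) * m
        ≤ ∑ k ∈ Finset.Icc 1 n, (1 - C k) * G k := by
      apply Finset.sum_le_sum
      intro k hk
      have hCk : 0 ≤ 1 - C k := by linarith [hCbar k]
      exact mul_le_mul_of_nonneg_left (hmle k hk) hCk
    have h2 : ∑ k ∈ Finset.Icc 1 n, (1 - C k) * G k
        ≤ ∑ k ∈ Finset.Icc 1 n, (a k - a (k+1)) := by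
      apply Finset.sum_le_sum
      intro k hk
      exact hdec k (Finset.mem_Icc.mp hk).1
    rw [telescope_Icc a n hn1] at h2
    have h3 : a 1 - a (n+1) ≤ a 1 - Fstar := by linarith [hlb (n+1)]
    calc m * (∑ k ∈ Finset.Icc 1 n, (1 - C k))
        = ∑ k ∈ Finset.Icc 1 n, (1 - C k) * m := by
          rw [← Finset.sum_mul]; ring
      _ ≤ a 1 - Fstar := le_trans h1 (le_trans h2 h3)
  constructor
  · rw [le_div_iff₀ hSpos]; exact hmain
  · apply div_le_div_of_nonneg_left _ hpos' hlow
    linarith [hlb 1]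
end

section
/- Let h₁,...,h_n : ℝ^d → ℝ be continuous, x ∈ X, and suppose for each pair (l₊, l) ∈ [n]² the constant M_{l₊,l} satisfies M_{l,l} = 0 and M_{l₊,l} ≥ sup{h_{l₊}(u) - h_l(u) : u ∈ X, h_l(u) = min_{l'} h_{l'}(u)}. Then for any x ∈ X and real η: min_l h_l(x) ≤ η if and only if there exists t ∈ {0,1}^n with Σ_l t_l = 1 and h_{l₊}(x) ≤ η + Σ_l t_l·M_{l₊,l} for every l₊ ∈ [n]. -/
open Finset

/-- Big-M epigraph equivalence: `min_l h_l(x) ≤ η` iff there is a 0/1 selector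
`t` summing to one with `h_{l₊}(x) ≤ η + Σ_l t_l·M_{l₊,l}` for every `l₊`. -/
theorem bigM_epigraph_equivalence
    (d n : ℕ) (hn : 0 < n)
    (h : Fin n → (Fin d → ℝ) → ℝ) (hcont : ∀ l, Continuous (h l))
    (X : Set (Fin d → ℝ))
    (M : Fin n → Fin n → ℝ)
    (hMdiag : ∀ l, M l l = 0)
    (hM : ∀ lp l : Fin n, ∀ u ∈ X,
      h l u = Finset.univ.inf' (Finset.univ_nonempty_iff.mpr ⟨⟨0, hn⟩⟩)
        (fun l' => h l' u) →
      h lp u - h l u ≤ M lp l)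
    (x : Fin d → ℝ) (hx : x ∈ X) (η : ℝ) :
    Finset.univ.inf' (Finset.univ_nonempty_iff.mpr ⟨⟨0, hn⟩⟩)
        (fun l => h l x) ≤ η ↔
      ∃ t : Fin n → ℝ, (∀ l, t l = 0 ∨ t l = 1) ∧ (∑ l, t l = 1) ∧
        ∀ lp : Fin n, h lp x ≤ η + ∑ l, t l * M lp l := by
  set ne : (Finset.univ : Finset (Fin n)).Nonempty :=
    Finset.univ_nonempty_iff.mpr ⟨⟨0, hn⟩⟩
  constructor
  · intro hle
    obtain ⟨σ, -, hσ⟩ := Finset.exists_mem_eq_inf' ne (fun l => h l x)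
    refine ⟨fun l => if l = σ then 1 else 0, fun l => by by_cases hl : l = σ <;> simp [hl],
      by simp, fun lp => ?_⟩
    have hsum : (∑ l, (if l = σ then (1:ℝ) else 0) * M lp l) = M lp σ := by
      rw [Finset.sum_eq_single σ] <;> simp +contextual
    rw [hsum]
    have := hM lp σ x hx hσ.symm
    have hσle : h σ x ≤ η := hσ ▸ hle
    linarith
  · rintro ⟨t, ht01, htsum, hineq⟩
    have : ∃ σ, t σ = 1 := by
      by_contra hc
      push_neg at hc
      have : ∀ l, t l = 0 := fun l => (ht01 l).resolve_right (hc l)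
      simp [this] at htsum
    obtain ⟨σ, hσ⟩ := this
    have hrest : ∀ l, l ≠ σ → t l = 0 := by
      intro l hl
      rcases ht01 l with h0 | h1
      · exact h0
      · exfalso
        have hnn : ∀ m ∈ (Finset.univ.erase σ).erase l, 0 ≤ t m := by
          intro m _
          rcases ht01 m with hm | hm <;> simp [hm]
        have hge : (2:ℝ) ≤ ∑ m, t m := by
          rw [← Finset.add_sum_erase _ t (Finset.mem_univ σ),
            ← Finset.add_sum_erase _ t (Finset.mem_erase.mpr ⟨hl, Finset.mem_univ l⟩)]
          have := Finset.sum_nonneg hnn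
          linarith
        linarith
    have hsum : (∑ l, t l * M σ l) = 0 := by
      rw [Finset.sum_eq_single σ]
      · simp [hMdiag]
      · intro b _ hb; simp [hrest b hb]
      · simp
    have hσle : h σ x ≤ η := by have := hineq σ; rw [hsum] at this; linarith
    exact le_trans (Finset.inf'_le _ (Finset.mem_univ σ)) hσle
end
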